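/- Let l be a nonnegative integer and m ∈ ℤ. Define ₁F₁(a; b; z) = Σ_{n=0}^∞ ((a)_n / (b)_n) zⁿ/n!, Ψ_{m,l}(θ,y) = e^{−i m θ/2} e^{−y²/2} y^l · ₁F₁( (1 + 2l − m)/4 ; l + 1/2 ; y² ), and for smooth F : ℝ² → ℂ define the lowering operator (η⁻ F)(θ,y) = (1/2) e^{2iθ} ( −y ∂_y F(θ,y) + i ∂_θ F(θ,y) − (y² + 1/2) F(θ,y) ). Then for all (θ,y) ∈ ℝ²: (η⁻ Ψ_{m,l})(θ,y) = −((2l + 1 − m)/4) · Ψ_{m−4,l}(θ,y). In particular η⁻ annihilates Ψ_{2l+1,l}(θ,y) = e^{−i(2l+1)θ/2} e^{−y²/2} y^l, the lowest weight vector. -/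

import Mathlib

open Complex

/-- The confluent hypergeometric function
`₁F₁(a;b;z) = Σ_{n≥0} ((a)_n/(b)_n) zⁿ/n!` (Pochhammer rising factorials). -/
noncomputable def oneFone (a b z : ℂ) : ℂ :=
  ∑' n : ℕ, ((ascPochhammer ℂ n).eval a / (ascPochhammer ℂ n).eval b) * z ^ n
    / (n.factorial : ℂ)

/-- The weight-`m` `K`-finite vector
`Ψ_{m,l}(θ,y) = e^{-imθ/2} e^{-y²/2} y^l ₁F₁((1+2l-m)/4; l+1/2; y²)`. -/
noncomputable def Psi (m : ℤ) (l : ℕ) (θ y : ℝ) : ℂ :=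
  Complex.exp (-I * (m : ℂ) * (θ : ℂ) / 2) * Complex.exp (-(y : ℂ) ^ 2 / 2)
    * (y : ℂ) ^ l
    * oneFone ((1 + 2 * (l : ℂ) - (m : ℂ)) / 4) ((l : ℂ) + 1/2) ((y : ℂ) ^ 2)

/-- Partial derivative in the first variable `θ`. -/
noncomputable def pderivT (F : ℝ → ℝ → ℂ) (θ y : ℝ) : ℂ := deriv (fun θ' => F θ' y) θ

/-- Partial derivative in the second variable `y`. -/
noncomputable def pderivY (F : ℝ → ℝ → ℂ) (θ y : ℝ) : ℂ := deriv (fun y' => F θ y') y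

/-- The lowering operator
`(η⁻F)(θ,y) = (1/2) e^{2iθ} (-y ∂_yF + i ∂_θF - (y² + 1/2) F)`. -/
noncomputable def etaMinus (F : ℝ → ℝ → ℂ) (θ y : ℝ) : ℂ :=
  (1/2 : ℂ) * Complex.exp (2 * I * (θ : ℂ))
    * (-(y : ℂ) * pderivY F θ y + I * pderivT F θ y
        - ((y : ℂ) ^ 2 + 1/2) * F θ y)

/-!
Separating variables, `Ψ_{m,l}(θ,y) = e^{-imθ/2} f_a(y)` with `f_a(y) = e^{-y²/2} y^l M(a,b,y²)`,
`M = ₁F₁`, `b = l + 1/2` and `a = (1+2l-m)/4`, and `η⁻` acts on the radial part as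
`f ↦ -y f' + (l - 2a - y²) f` (times `e^{2iθ}/2`, which shifts the weight by `-4`).
Differentiating the Gaussian and `y^l` cancels everything except `-2 z M'(z)` at `z = y²`, and
Kummer's contiguous relation `z M'(a,b,z) = a (M(a+1,b,z) - M(a,b,z))`, which is
`(a+n) (a)_n = a (a+1)_n` coefficientwise, turns the result into `-2a f_{a+1}`.
At `m = 2l+1` we have `a = 0` and `M(0,b,z) = 1`.
-/

open Filter

theorem summable_norm_mul_pow_of_norm_succ_le {E : Type*} [SeminormedAddCommGroup E]
    {c : ℕ → E} {C : ℝ} (hc : ∀ᶠ n in atTop, ‖c (n + 1)‖ ≤ C / (n + 1) * ‖c n‖) (r : ℝ) :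
    Summable fun n => ‖c n‖ * r ^ n := by
  refine summable_of_ratio_norm_eventually_le (r := 1 / 2) (by norm_num) ?_
  filter_upwards [hc, eventually_ge_atTop ⌈2 * |C| * |r|⌉₊] with n hn hN
  have hCr : |C| * |r| ≤ (n + 1) / 2 := by
    have := (Nat.ceil_le.1 hN : 2 * |C| * |r| ≤ n)
    linarith
  have hratio : C / (n + 1) * |r| ≤ 1 / 2 := by
    rw [div_mul_eq_mul_div, div_le_iff₀ (by positivity)]
    linarith [mul_le_mul_of_nonneg_right (le_abs_self C) (abs_nonneg r)]
  simp only [norm_mul, norm_pow, Real.norm_eq_abs, abs_norm, pow_succ]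
  calc ‖c (n + 1)‖ * (|r| ^ n * |r|) ≤ C / (n + 1) * ‖c n‖ * (|r| ^ n * |r|) := by gcongr
    _ = C / (n + 1) * |r| * (‖c n‖ * |r| ^ n) := by ring
    _ ≤ 1 / 2 * (‖c n‖ * |r| ^ n) := by gcongr

theorem hasDerivAt_tsum_mul_pow {𝕜 : Type*} [RCLike 𝕜] {c : ℕ → 𝕜}
    (hc : ∀ r : ℝ, Summable fun n => ‖c n‖ * r ^ n) (z : 𝕜) :
    HasDerivAt (fun w => ∑' n, c n * w ^ n) (∑' n, n * c n * z ^ (n - 1)) z := by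
  set R := ‖z‖ + 1
  have hR : 1 ≤ R := le_add_of_nonneg_left (norm_nonneg z)
  have hz : z ∈ Metric.ball (0 : 𝕜) R := by simp [R]
  refine hasDerivAt_tsum_of_isPreconnected (g := fun n w => c n * w ^ n)
    (g' := fun n w => n * c n * w ^ (n - 1)) (hc (2 * R)) Metric.isOpen_ball
    (convex_ball 0 R).isPreconnected (fun n w _ => ?_) (fun n w hw => ?_) hz
    (.of_norm_bounded (hc ‖z‖) fun n => by simp) hz
  · simpa [mul_comm, mul_assoc] using (hasDerivAt_pow n w).const_mul (c n)
  · have hw : ‖w‖ ≤ R := (mem_ball_zero_iff.1 hw).le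
    calc ‖(n : 𝕜) * c n * w ^ (n - 1)‖ = ‖c n‖ * (n * ‖w‖ ^ (n - 1)) := by
          simp only [norm_mul, norm_pow, RCLike.norm_natCast]; ring
      _ ≤ ‖c n‖ * (2 ^ n * R ^ n) := by
          gcongr
          · exact_mod_cast Nat.lt_two_pow_self.le
          · exact (pow_le_pow_left₀ (norm_nonneg w) hw _).trans (pow_le_pow_right₀ hR (n.sub_le 1))
      _ = ‖c n‖ * (2 * R) ^ n := by rw [mul_pow]

section Kummer

variable (a b : ℂ)

noncomputable def kummerCoeff (n : ℕ) : ℂ :=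
  (ascPochhammer ℂ n).eval a / (ascPochhammer ℂ n).eval b / n.factorial

theorem oneFone_eq_tsum (z : ℂ) : oneFone a b z = ∑' n, kummerCoeff a b n * z ^ n :=
  tsum_congr fun n => by unfold kummerCoeff; ring

-- No hypothesis on `b` is needed: once `(b)_n = 0`, both sides vanish since `x / 0 = 0`.
theorem kummerCoeff_succ (n : ℕ) :
    kummerCoeff a b (n + 1) = kummerCoeff a b n * ((a + n) / ((b + n) * (n + 1))) := by
  simp only [kummerCoeff, ascPochhammer_succ_eval, Nat.factorial_succ, Nat.cast_mul,
    Nat.cast_succ, div_eq_mul_inv, mul_inv]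
  ring

theorem add_mul_kummerCoeff (n : ℕ) :
    (a + n) * kummerCoeff a b n = a * kummerCoeff (a + 1) b n := by
  have hshift : (ascPochhammer ℂ n).eval a * (a + n) = a * (ascPochhammer ℂ n).eval (a + 1) := by
    rw [← ascPochhammer_succ_eval, ascPochhammer_succ_left]
    simp [Polynomial.eval_comp]
  simp only [kummerCoeff, div_mul_eq_mul_div, mul_div_assoc', mul_comm (a + n), hshift]

theorem norm_kummerCoeff_succ_le :
    ∀ᶠ n : ℕ in atTop, ‖kummerCoeff a b (n + 1)‖ ≤ 4 / (n + 1) * ‖kummerCoeff a b n‖ := by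
  filter_upwards [eventually_ge_atTop 1, eventually_ge_atTop ⌈‖a‖⌉₊,
    eventually_ge_atTop ⌈2 * ‖b‖⌉₊] with n hn1 hna hnb
  have hn1 : (1 : ℝ) ≤ n := by exact_mod_cast hn1
  have hna : ‖a‖ ≤ n := Nat.ceil_le.1 hna
  have hnb : 2 * ‖b‖ ≤ n := Nat.ceil_le.1 hnb
  have hnum : ‖a + n‖ ≤ 2 * n := by
    have := norm_add_le a (n : ℂ)
    rw [Complex.norm_natCast] at this
    linarith
  have hden : n / 2 ≤ ‖b + n‖ := by
    have := norm_sub_norm_le (n : ℂ) (-b)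
    rw [Complex.norm_natCast, norm_neg, sub_neg_eq_add, add_comm] at this
    linarith
  have hratio : ‖a + n‖ / ‖b + n‖ ≤ 4 :=
    calc ‖a + n‖ / ‖b + n‖ ≤ 2 * n / (n / 2) := by gcongr
    _ = 4 := by field_simp; norm_num
  rw [kummerCoeff_succ, norm_mul, mul_comm, norm_div, norm_mul, ← div_div,
    show ‖(n : ℂ) + 1‖ = n + 1 by exact_mod_cast Complex.norm_natCast (n + 1)]
  gcongr

theorem summable_norm_kummerCoeff_mul_pow (r : ℝ) :
    Summable fun n => ‖kummerCoeff a b n‖ * r ^ n :=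
  summable_norm_mul_pow_of_norm_succ_le (norm_kummerCoeff_succ_le a b) r

theorem summable_kummerCoeff_mul_pow (z : ℂ) : Summable fun n => kummerCoeff a b n * z ^ n :=
  .of_norm_bounded (summable_norm_kummerCoeff_mul_pow a b ‖z‖) fun n => by simp

theorem hasDerivAt_oneFone (z : ℂ) :
    HasDerivAt (oneFone a b) (∑' n, n * kummerCoeff a b n * z ^ (n - 1)) z := by
  rw [show oneFone a b = _ from funext (oneFone_eq_tsum a b)]
  exact hasDerivAt_tsum_mul_pow (summable_norm_kummerCoeff_mul_pow a b) z

theorem differentiable_oneFone : Differentiable ℂ (oneFone a b) :=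
  fun z => (hasDerivAt_oneFone a b z).differentiableAt

theorem mul_deriv_oneFone (z : ℂ) :
    z * deriv (oneFone a b) z = a * (oneFone (a + 1) b z - oneFone a b z) := by
  rw [(hasDerivAt_oneFone a b z).deriv, oneFone_eq_tsum, oneFone_eq_tsum,
    ← (summable_kummerCoeff_mul_pow _ b z).tsum_sub (summable_kummerCoeff_mul_pow a b z),
    ← tsum_mul_left, ← tsum_mul_left]
  refine tsum_congr fun n => ?_
  have hz : z * z ^ (n - 1) * n = z ^ n * n := by
    cases n <;> simp [pow_succ']
  linear_combination z ^ n * add_mul_kummerCoeff a b n + kummerCoeff a b n * hz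

theorem oneFone_zero_left (z : ℂ) : oneFone 0 b z = 1 := by
  rw [oneFone, tsum_eq_single 0 fun n hn => by simp [ascPochhammer_ne_zero_eval_zero _ hn]]
  simp

end Kummer

noncomputable def kummerRadial (a b : ℂ) (l : ℕ) (y : ℝ) : ℂ :=
  Complex.exp (-(y : ℂ) ^ 2 / 2) * (y : ℂ) ^ l * oneFone a b ((y : ℂ) ^ 2)

theorem hasDerivAt_kummerRadial (a b : ℂ) (l : ℕ) (y : ℝ) :
    HasDerivAt (kummerRadial a b l)
      (Complex.exp (-(y : ℂ) ^ 2 / 2) * (-(y : ℂ)) * (y : ℂ) ^ l * oneFone a b ((y : ℂ) ^ 2)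
        + Complex.exp (-(y : ℂ) ^ 2 / 2) * (l * (y : ℂ) ^ (l - 1)) * oneFone a b ((y : ℂ) ^ 2)
        + Complex.exp (-(y : ℂ) ^ 2 / 2) * (y : ℂ) ^ l
          * (deriv (oneFone a b) ((y : ℂ) ^ 2) * (2 * y))) y := by
  have hgauss : HasDerivAt (fun z : ℂ => Complex.exp (-z ^ 2 / 2))
      (Complex.exp (-(y : ℂ) ^ 2 / 2) * (-(y : ℂ))) y := by
    refine (((hasDerivAt_pow 2 (y : ℂ)).fun_neg).div_const 2).cexp.congr_deriv ?_
    simp only [Nat.cast_ofNat]; ring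
  have hsq : HasDerivAt (fun t : ℝ => (t : ℂ) ^ 2) (2 * y) y := by
    simpa using (hasDerivAt_pow 2 (y : ℂ)).comp_ofReal
  have hM := (differentiable_oneFone a b _).hasDerivAt.comp y hsq
  exact ((hgauss.comp_ofReal.mul (hasDerivAt_pow l (y : ℂ)).comp_ofReal).mul hM).congr_deriv
    (by simp only [Function.comp_apply, Pi.mul_apply]; ring)

theorem neg_mul_deriv_kummerRadial_add (a b : ℂ) (l : ℕ) (y : ℝ) :
    -(y : ℂ) * deriv (kummerRadial a b l) y + (l - 2 * a - (y : ℂ) ^ 2) * kummerRadial a b l y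
      = -2 * a * kummerRadial (a + 1) b l y := by
  have hpow : (y : ℂ) * (l * (y : ℂ) ^ (l - 1)) = l * (y : ℂ) ^ l := by
    cases l <;> simp [pow_succ]; ring
  rw [(hasDerivAt_kummerRadial a b l y).deriv]
  simp only [kummerRadial]
  linear_combination (-Complex.exp (-(y : ℂ) ^ 2 / 2) * oneFone a b ((y : ℂ) ^ 2)) * hpow
    + (-2 * Complex.exp (-(y : ℂ) ^ 2 / 2) * (y : ℂ) ^ l) * mul_deriv_oneFone a b ((y : ℂ) ^ 2)

theorem etaMinus_exp_mul (k : ℂ) (f : ℝ → ℂ) (θ y : ℝ) :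
    etaMinus (fun θ y => Complex.exp (-I * k * θ / 2) * f y) θ y
      = 1 / 2 * Complex.exp (2 * I * θ) * Complex.exp (-I * k * θ / 2)
        * (-(y : ℂ) * deriv f y + (k / 2 - (y : ℂ) ^ 2 - 1 / 2) * f y) := by
  have hθ : HasDerivAt (fun t : ℝ => Complex.exp (-I * k * t / 2) * f y)
      (Complex.exp (-I * k * θ / 2) * (-I * k / 2) * f y) θ := by
    have := (((hasDerivAt_id (θ : ℂ)).const_mul (-I * k)).div_const 2).cexp.comp_ofReal
    simpa using this.mul_const (f y)
  simp only [etaMinus, pderivT, pderivY, hθ.deriv, deriv_const_mul_field]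
  linear_combination (-1 / 2 * Complex.exp (2 * I * θ) * Complex.exp (-I * k * θ / 2) * (k / 2)
    * f y) * I_sq

theorem Psi_eq_exp_mul_kummerRadial (m : ℤ) (l : ℕ) :
    Psi m l = fun (θ y : ℝ) => Complex.exp (-I * m * θ / 2)
      * kummerRadial ((1 + 2 * l - m) / 4) (l + 1 / 2) l y := by
  ext θ y
  simp only [Psi, kummerRadial]
  ring

theorem etaMinus_Psi (l : ℕ) (m : ℤ) (θ y : ℝ) :
    etaMinus (Psi m l) θ y = -((2 * (l : ℂ) + 1 - (m : ℂ)) / 4) * Psi (m - 4) l θ y := by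
  have hshift : (1 + 2 * l - ((m - 4 : ℤ) : ℂ)) / 4 = (1 + 2 * l - m) / 4 + 1 := by
    push_cast; ring
  have hexp : Complex.exp (-I * ((m - 4 : ℤ) : ℂ) * θ / 2)
      = Complex.exp (2 * I * θ) * Complex.exp (-I * m * θ / 2) := by
    rw [← Complex.exp_add]; push_cast; ring_nf
  rw [Psi_eq_exp_mul_kummerRadial, Psi_eq_exp_mul_kummerRadial, etaMinus_exp_mul]
  beta_reduce
  rw [hshift, hexp]
  linear_combination (1 / 2 * Complex.exp (2 * I * θ) * Complex.exp (-I * m * θ / 2))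
    * neg_mul_deriv_kummerRadial_add ((1 + 2 * l - m) / 4) (l + 1 / 2) l y

/-- `η⁻ Ψ_{m,l} = -((2l+1-m)/4) Ψ_{m-4,l}`; in particular `η⁻` annihilates the
lowest weight vector `Ψ_{2l+1,l}(θ,y) = e^{-i(2l+1)θ/2} e^{-y²/2} y^l`. -/
theorem etaMinus_action (l : ℕ) (m : ℤ) :
    (∀ θ y : ℝ,
      etaMinus (Psi m l) θ y
        = -((2 * (l : ℂ) + 1 - (m : ℂ)) / 4) * Psi (m - 4) l θ y) ∧
    (∀ θ y : ℝ, etaMinus (Psi (2 * (l : ℤ) + 1) l) θ y = 0) ∧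
    (∀ θ y : ℝ,
      Psi (2 * (l : ℤ) + 1) l θ y
        = Complex.exp (-I * (2 * (l : ℂ) + 1) * (θ : ℂ) / 2)
            * Complex.exp (-(y : ℂ) ^ 2 / 2) * (y : ℂ) ^ l) := by
  refine ⟨etaMinus_Psi l m, fun θ y => ?_, fun θ y => ?_⟩
  · rw [etaMinus_Psi]
    push_cast
    ring
  · have hlowest : ((1 + 2 * l - ((2 * l + 1 : ℤ) : ℂ)) / 4 : ℂ) = 0 := by push_cast; ring
    rw [Psi_eq_exp_mul_kummerRadial]
    simp only [kummerRadial, hlowest, oneFone_zero_left]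
    push_cast
    ring
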